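/- Let X, Y be coinfinite primitive recursive sets with R_Y ≤_pr R_X. Then either the pair (Y,X) satisfies the ♦-property, or R_Y ≤_pr R_{X^{[-1]}}, where X^{[-1]} is obtained from X by removing the least element of the complement of X from the complement (adding it to X). -/

import Mathlib

/-- The equivalence relation `R_X`: `x R_X y` iff both in `X` or `x = y`. -/
def REq (X : Set ℕ) (x y : ℕ) : Prop := (x ∈ X ∧ y ∈ X) ∨ x = y

/-- Primitive recursive reducibility between binary relations on ℕ. -/
def PrRed (R S : ℕ → ℕ → Prop) : Prop :=
  ∃ f : ℕ → ℕ, Primrec f ∧ ∀ x y, R x y ↔ S (f x) (f y)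

/-- pr-bireducibility. -/
def PrEquiv (R S : ℕ → ℕ → Prop) : Prop := PrRed R S ∧ PrRed S R

/-- `X` is a primitive recursive set. -/
def PRSet (X : Set ℕ) : Prop :=
  ∃ f : ℕ → Bool, Primrec f ∧ ∀ n, n ∈ X ↔ f n = true

/-- `#(0^X)[s]`: the number of elements of the complement of `X` that are `≤ s`. -/
noncomputable def zc (X : Set ℕ) (s : ℕ) : ℕ := {k | k ≤ s ∧ k ∉ X}.ncard

/-- The ♦-property for a pair of sets. -/
def DiamondProp (X Y : Set ℕ) : Prop :=
  ∃ X' Y' : Set ℕ, PRSet X' ∧ PRSet Y' ∧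
    PrEquiv (REq X') (REq X) ∧ PrEquiv (REq Y') (REq Y) ∧
    ∀ s, ∃ t, s ≤ t ∧ zc X' t = zc Y' t

/-- `X^{[-1]}`: add the least element of the complement of `X` into `X`. -/
noncomputable def remOne (X : Set ℕ) : Set ℕ := insert (sInf Xᶜ) X

/-!
The counting functions `zc X` and `zc Y` are monotone and grow by at most one per step, so either
they agree infinitely often, which is the ♦-property witnessed by `Y` and `X` themselves, or one of
them stays strictly below the other from some point on.

If eventually `zc A < zc B`, send every element of `A` to the least element `m` of `Bᶜ` and the
`k`-th element of `Aᶜ` to the `(k+1)`-st element of `Bᶜ`. The strict inequality bounds the search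
for that element, so the map is primitive recursive; it avoids `B ∪ {m}` off `A`, hence reduces
`R_A` both to `R_B` and to `R_{B^{[-1]}}`. For `A = X`, `B = Y` this makes `R_X` and `R_Y`
pr-equivalent, which gives the ♦-property trivially; for `A = Y`, `B = X` it gives
`R_Y ≤_pr R_{X^{[-1]}}`.
-/

open Filter Finset

theorem Primrec.nat_count {p : ℕ → Prop} [DecidablePred p] (hp : PrimrecPred p) :
    Primrec (Nat.count p) :=
  (Primrec.nat_rec₁ 0 (Primrec.nat_add.comp₂ Primrec₂.right
    (Primrec.ite (hp.comp Primrec.fst) (Primrec.const 1) (Primrec.const 0)).to₂)).of_eq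
    fun n => by induction n <;> simp [Nat.count_succ, *]

namespace Nat

variable {p : ℕ → Prop} [DecidablePred p] {k N : ℕ}

theorem lt_card_of_lt_count (h : k < count p N) :
    ∀ hf : (Set.ofPred p).Finite, k < #hf.toFinset :=
  fun hf => h.trans_le (count_le_card hf N)

theorem count_nth_of_lt_count (h : k < count p N) : count p (nth p k) = k :=
  count_nth (lt_card_of_lt_count h)

theorem nth_mem_of_lt_count (h : k < count p N) : p (nth p k) :=
  nth_mem k (lt_card_of_lt_count h)

theorem nth_eq_findGreatest_of_lt_count (h : k < count p N) :
    nth p k = N.findGreatest (fun t => count p t ≤ k) := by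
  refine (findGreatest_eq_iff.2 ⟨(nth_lt_of_lt_count h).le, fun _ => ?_, fun t ht _ => ?_⟩).symm
  · rw [count_nth_of_lt_count h]
  · have := count_monotone p (Nat.succ_le_of_lt ht)
    rw [count_nth_succ (lt_card_of_lt_count h)] at this
    omega

end Nat

theorem Primrec.nth_of_lt_count {α : Type*} [Primcodable α] {p : ℕ → Prop} [DecidablePred p]
    (hp : PrimrecPred p) {k N : α → ℕ} (hk : Primrec k) (hN : Primrec N)
    (h : ∀ a, k a < Nat.count p (N a)) : Primrec fun a => Nat.nth p (k a) :=
  (Primrec.nat_findGreatest hN (Primrec.nat_le.comp₂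
    ((Primrec.nat_count hp).comp Primrec.snd).to₂ (hk.comp Primrec.fst).to₂)).of_eq
    fun a => (Nat.nth_eq_findGreatest_of_lt_count (h a)).symm

theorem PRSet.primrecPred {X : Set ℕ} (hX : PRSet X) : PrimrecPred (· ∈ X) := by
  obtain ⟨χ, hχ, hmem⟩ := hX
  exact ⟨fun n => decidable_of_iff _ (hmem n).symm, hχ.of_eq fun n => by simp [hmem]⟩

theorem zc_eq_count (X : Set ℕ) [DecidablePred (· ∈ X)] (s : ℕ) :
    zc X s = Nat.count (· ∉ X) (s + 1) := by
  rw [zc, Nat.count_eq_card_filter_range, ← Set.ncard_coe_finset]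
  congr 1
  ext k
  simp

theorem zc_mono (X : Set ℕ) : Monotone (zc X) := by
  classical
  exact fun s t hst => by simpa only [zc_eq_count] using Nat.count_monotone _ (by omega)

theorem zc_add_one_le (X : Set ℕ) (s : ℕ) : zc X (s + 1) ≤ zc X s + 1 := by
  classical
  rw [zc_eq_count, zc_eq_count, Nat.count_succ]
  split <;> omega

theorem forall_ge_lt_of_forall_ge_ne {u v : ℕ → ℕ} (hu : ∀ t, u (t + 1) ≤ u t + 1)
    (hv : Monotone v) {s : ℕ} (hs : u s < v s) (hne : ∀ t ≥ s, u t ≠ v t) :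
    ∀ t ≥ s, u t < v t := by
  intro t ht
  induction t, ht using Nat.le_induction with
  | base => exact hs
  | succ t ht ih =>
    have := hv (Nat.le_succ t)
    exact lt_of_le_of_ne (by linarith [hu t]) (hne (t + 1) (by omega))

theorem frequently_eq_or_eventually_lt_or_eventually_gt {u v : ℕ → ℕ}
    (hu : Monotone u) (hu1 : ∀ t, u (t + 1) ≤ u t + 1)
    (hv : Monotone v) (hv1 : ∀ t, v (t + 1) ≤ v t + 1) :
    (∃ᶠ t in atTop, u t = v t) ∨ (∀ᶠ t in atTop, u t < v t) ∨ (∀ᶠ t in atTop, v t < u t) := by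
  refine or_iff_not_imp_left.2 fun hfreq => ?_
  obtain ⟨s, hs⟩ := eventually_atTop.1 (not_frequently.1 hfreq)
  rcases lt_or_gt_of_ne (hs s le_rfl) with hlt | hgt
  · exact Or.inl (eventually_atTop.2 ⟨s, forall_ge_lt_of_forall_ge_ne hu1 hv hlt hs⟩)
  · exact Or.inr (eventually_atTop.2
      ⟨s, forall_ge_lt_of_forall_ge_ne hv1 hu hgt fun t ht => Ne.symm (hs t ht)⟩)

theorem prEquiv_refl (R : ℕ → ℕ → Prop) : PrEquiv R R :=
  ⟨⟨id, Primrec.id, fun _ _ => Iff.rfl⟩, ⟨id, Primrec.id, fun _ _ => Iff.rfl⟩⟩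

theorem prRed_REq_of_collapse {A C : Set ℕ} {f : ℕ → ℕ} (hf : Primrec f) {c : ℕ}
    (hA : ∀ x ∈ A, f x = c) (hinj : Set.InjOn f Aᶜ) (hmaps : Set.MapsTo f Aᶜ (Cᶜ \ {c})) :
    PrRed (REq A) (REq C) := by
  refine ⟨f, hf, fun x y => ?_⟩
  by_cases hx : x ∈ A <;> by_cases hy : y ∈ A
  · simp [REq, hx, hy, hA]
  · obtain ⟨hyC, hyc⟩ := hmaps hy
    simp only [REq, hA x hx]
    grind
  · obtain ⟨hxC, hxc⟩ := hmaps hx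
    simp only [REq, hA y hy]
    grind
  · have hfx : f x ∉ C := (hmaps hx).1
    simp only [REq, hx, hfx, false_and, false_or]
    exact ⟨congrArg f, fun h => hinj hx hy h⟩

theorem zc_pos_of_notMem {A : Set ℕ} {x : ℕ} (hx : x ∉ A) : 0 < zc A x := by
  classical
  rw [zc_eq_count, Nat.count_succ, if_pos hx]
  omega

theorem zc_injOn_compl (A : Set ℕ) : Set.InjOn (zc A) Aᶜ := by
  classical
  intro x (hx : x ∉ A) y (hy : y ∉ A) h
  rw [zc_eq_count, zc_eq_count, Nat.count_succ, Nat.count_succ, if_pos hx, if_pos hy] at h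
  exact Nat.count_injective (p := (· ∉ A)) hx hy (by omega)

theorem exists_collapse_of_eventually_zc_lt {A B : Set ℕ} (hA : PRSet A) (hB : PRSet B)
    (hlt : ∀ᶠ n in atTop, zc A n < zc B n) :
    ∃ f : ℕ → ℕ, Primrec f ∧ (∀ x ∈ A, f x = sInf Bᶜ) ∧ Set.InjOn f Aᶜ ∧
      Set.MapsTo f Aᶜ (Bᶜ \ {sInf Bᶜ}) := by
  classical
  obtain ⟨s₀, hs₀⟩ := eventually_atTop.1 hlt
  set idx : ℕ → ℕ := fun x => if x ∈ A then 0 else zc A x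
  have hbound : ∀ x, idx x < Nat.count (· ∉ B) (max x s₀ + 1) := by
    intro x
    rw [← zc_eq_count]
    calc idx x ≤ zc A x := by simp only [idx]; split <;> omega
      _ ≤ zc A (max x s₀) := zc_mono A (le_max_left x s₀)
      _ < zc B (max x s₀) := hs₀ _ (le_max_right x s₀)
  have hcount : ∀ x, Nat.count (· ∉ B) (Nat.nth (· ∉ B) (idx x)) = idx x :=
    fun x => Nat.count_nth_of_lt_count (hbound x)
  have hnth_zero : Nat.nth (· ∉ B) 0 = sInf Bᶜ := Nat.nth_zero
  have hidx_pr : Primrec idx :=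
    (Primrec.ite hA.primrecPred (Primrec.const 0)
      ((Primrec.nat_count hA.primrecPred.not).comp Primrec.succ)).of_eq
      fun x => by simp only [idx, zc_eq_count]
  refine ⟨fun x => Nat.nth (· ∉ B) (idx x), ?_, fun x hx => ?_, fun x hx y hy hxy => ?_,
    fun x hx => ⟨Nat.nth_mem_of_lt_count (hbound x), fun (h : Nat.nth _ _ = _) => ?_⟩⟩
  · exact Primrec.nth_of_lt_count hB.primrecPred.not hidx_pr
      (Primrec.succ.comp (Primrec.nat_max.comp Primrec.id (Primrec.const s₀))) hbound
  · simpa only [idx, if_pos hx] using hnth_zero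
  · have hidx : idx x = idx y := by rw [← hcount x, show Nat.nth _ _ = _ from hxy, hcount y]
    simp only [idx, if_neg hx, if_neg hy] at hidx
    exact zc_injOn_compl A hx hy hidx
  · have h0 : idx x = 0 := by
      rw [← hcount x, h, ← hnth_zero]
      exact Nat.count_nth_zero _
    have hpos := zc_pos_of_notMem hx
    simp only [idx, if_neg hx] at h0
    omega

theorem stmt_19_general (X Y : Set ℕ) (hX : PRSet X) (hY : PRSet Y)
    (hred : PrRed (REq Y) (REq X)) :
    DiamondProp Y X ∨ PrRed (REq Y) (REq (remOne X)) := by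
  rcases frequently_eq_or_eventually_lt_or_eventually_gt (zc_mono Y) (zc_add_one_le Y)
    (zc_mono X) (zc_add_one_le X) with hfreq | hYX | hXY
  · exact Or.inl ⟨Y, X, hY, hX, prEquiv_refl _, prEquiv_refl _, frequently_atTop.1 hfreq⟩
  · obtain ⟨f, hf, hfY, hinj, hmaps⟩ := exists_collapse_of_eventually_zc_lt hY hX hYX
    refine Or.inr (prRed_REq_of_collapse hf hfY hinj (hmaps.mono_right ?_))
    rintro z ⟨hzX, hzm⟩
    exact ⟨fun hz => hz.elim hzm hzX, hzm⟩
  · obtain ⟨f, hf, hfX, hinj, hmaps⟩ := exists_collapse_of_eventually_zc_lt hX hY hXY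
    exact Or.inl ⟨X, X, hX, hX, ⟨prRed_REq_of_collapse hf hfX hinj hmaps, hred⟩, prEquiv_refl _,
      fun s => ⟨s, le_rfl, rfl⟩⟩

theorem stmt_19 (X Y : Set ℕ) (hX : PRSet X) (hY : PRSet Y)
    (hXc : Xᶜ.Infinite) (hYc : Yᶜ.Infinite)
    (hred : PrRed (REq Y) (REq X)) :
    DiamondProp Y X ∨ PrRed (REq Y) (REq (remOne X)) :=
  stmt_19_general X Y hX hY hred
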